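/- arXiv:1810.08663 — 2 statements merged into one kernel-verified Lean document; each statement's English description precedes it below -/
import Mathlib

section
/- For all nonnegative reals x_1,...,x_m and reals b_1,...,b_m, the inequality \sum_{i=1}^m x_i (b_i - \log x_i) \le (\sum_{i=1}^m x_i) \log(\sum_{j=1}^m e^{b_j}) + 1/e holds, with the convention 0 \log 0 = 0. -/
lemma key_xlog (x c : ℝ) (hx : 0 ≤ x) : x * (c - Real.log x) ≤ Real.exp (c - 1) := by
  rcases hx.eq_or_lt with h | h
  · simp [← h]
    positivity
  · have ht : 0 < Real.exp c / (x * Real.exp 1) := by positivity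
    have hlog := Real.log_le_sub_one_of_pos ht
    have hx' : x ≠ 0 := ne_of_gt h
    have he : (Real.exp 1) ≠ 0 := (Real.exp_pos 1).ne'
    rw [Real.log_div (Real.exp_pos c).ne' (by positivity),
      Real.log_exp, Real.log_mul hx' he, Real.log_exp] at hlog
    have h1 : c - Real.log x ≤ Real.exp c / (x * Real.exp 1) := by linarith
    have h2 : x * (c - Real.log x) ≤ x * (Real.exp c / (x * Real.exp 1)) :=
      mul_le_mul_of_nonneg_left h1 hx
    calc x * (c - Real.log x) ≤ x * (Real.exp c / (x * Real.exp 1)) := h2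
      _ = Real.exp c / Real.exp 1 := by field_simp
      _ = Real.exp (c - 1) := by rw [Real.exp_sub]

/-- Inequality (20.3.5) of Katok–Hasselblatt: for nonnegative reals `x i` and reals `b i`,
`∑ xᵢ (bᵢ - log xᵢ) ≤ (∑ xᵢ) log (∑ e^{bⱼ}) + 1/e`, with the convention `0 log 0 = 0`
(automatic since `Real.log 0 = 0`). -/
theorem sum_mul_sub_log_le (m : ℕ) (x b : Fin m → ℝ) (hx : ∀ i, 0 ≤ x i) :
    ∑ i, x i * (b i - Real.log (x i)) ≤
      (∑ i, x i) * Real.log (∑ j, Real.exp (b j)) + 1 / Real.exp 1 := by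
  rcases Nat.eq_zero_or_pos m with hm | hm
  · subst hm
    simp
    positivity
  have : Nonempty (Fin m) := ⟨⟨0, hm⟩⟩
  set S := ∑ j, Real.exp (b j) with hSdef
  have hS : 0 < S := Finset.sum_pos (fun j _ => Real.exp_pos _) Finset.univ_nonempty
  have h1 : ∀ i, x i * (b i - Real.log (x i)) ≤
      Real.exp (b i - Real.log S - 1) + x i * Real.log S := by
    intro i
    have hk := key_xlog (x i) (b i - Real.log S) (hx i)
    nlinarith [hk]
  calc ∑ i, x i * (b i - Real.log (x i))
      ≤ ∑ i, (Real.exp (b i - Real.log S - 1) + x i * Real.log S) :=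
        Finset.sum_le_sum fun i _ => h1 i
    _ = (∑ i, Real.exp (b i - Real.log S - 1)) + (∑ i, x i) * Real.log S := by
        rw [Finset.sum_add_distrib, Finset.sum_mul]
    _ = (∑ i, x i) * Real.log S + 1 / Real.exp 1 := by
        have : ∑ i, Real.exp (b i - Real.log S - 1)
            = (∑ i, Real.exp (b i)) / (S * Real.exp 1) := by
          rw [Finset.sum_div]
          refine Finset.sum_congr rfl fun i _ => ?_
          rw [sub_sub, Real.exp_sub, Real.exp_add, Real.exp_log hS]
        rw [this, ← hSdef]
        field_simp
        ring
end

section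
/- Conditional entropy subadditivity for refinements (Hu–Hua–Wu Lemma 2.6(i) specialization): let \nu be a probability measure, f a measure-preserving invertible transformation, \alpha a finite partition and \gamma a measurable partition with H_\nu(\alpha|\gamma) < \infty. If for every i = 1,...,n-1 the partition f^i(\alpha_0^{i-1} \vee \gamma) refines a fixed measurable partition \beta (i.e. every element is contained in an element of \beta), then H_\nu(\alpha_0^{n-1} | \gamma) \le H_\nu(\alpha|\gamma) + (n-1) H_\nu(\alpha|\beta), where \alpha_0^{n-1} = \bigvee_{i=0}^{n-1} f^{-i}\alpha. -/
open MeasureTheory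

/-- A system of conditional measures (Rokhlin disintegration) of `μ` with respect to the
measurable partition whose element containing `x` is `F x`: each `c x` is a probability
measure supported on `F x`, the system is constant on partition elements, and it
disintegrates `μ`. -/
def IsCondSystem {X : Type*} [MeasurableSpace X] (μ : Measure X) (F : X → Set X)
    (c : X → Measure X) : Prop :=
  (∀ x, IsProbabilityMeasure (c x)) ∧
  (∀ x, c x (F x)ᶜ = 0) ∧
  (∀ x y, y ∈ F x → c y = c x) ∧
  (∀ A : Set X, MeasurableSet A → μ A = ∫⁻ x, c x A ∂μ)

open scoped ENNReal

/-- The element of the finite partition `P` containing `x` (union of all members of `P`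
containing `x`; for a genuine partition this is the unique such member). -/
def pElem {X : Type*} (P : Finset (Set X)) (x : X) : Set X :=
  ⋃₀ {A : Set X | A ∈ P ∧ x ∈ A}

/-- Conditional entropy `H_ν(P | partition with conditionals c) =
-∫ log (c x)(P(x)) dν`, valued in `[0,∞]`. -/
noncomputable def condEntropyPart {X : Type*} [MeasurableSpace X]
    (ν : Measure X) (P : Finset (Set X)) (c : X → Measure X) : ℝ≥0∞ :=
  ∫⁻ x, ENNReal.ofReal (-Real.log ((c x (pElem P x)).toReal)) ∂ν

/-- Conditional entropy `H_ν(⋁_{j<n} f^{-j}P | γ)` where the cell of the join containing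
`x` is `⋂_{j<n} f^{-j}(P(f^j x))` and `γ` has conditional measures `c`. -/
noncomputable def condEntropyJoin {X : Type*} [MeasurableSpace X]
    (ν : Measure X) (f : X → X) (P : Finset (Set X)) (c : X → Measure X) (n : ℕ) : ℝ≥0∞ :=
  ∫⁻ x, ENNReal.ofReal
    (-Real.log ((c x (⋂ j < n, f^[j] ⁻¹' pElem P (f^[j] x))).toReal)) ∂ν

set_option linter.unusedSectionVars false
namespace HHW

variable {X : Type*} [MeasurableSpace X] {ν : Measure X} {F : X → Set X} {c : X → Measure X}

/-- Each `x ↦ c x A` is a.e. equal to a measurable function. -/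
lemma aemeas_cond [IsProbabilityMeasure ν] (hc : IsCondSystem ν F c)
    {A : Set X} (hA : MeasurableSet A) : AEMeasurable (fun x => c x A) ν := by
  have hprob : ∀ x, IsProbabilityMeasure (c x) := hc.1
  set g : X → ℝ≥0∞ := fun x => c x A with hg
  have hgle : ∀ x, g x ≤ 1 := fun x => by have := hprob x; exact prob_le_one
  have hint : ∫⁻ x, g x ∂ν = ν A := (hc.2.2.2 A hA).symm
  obtain ⟨φ, φm, φle, hφ⟩ := exists_measurable_le_lintegral_eq ν g
  set g2 : X → ℝ≥0∞ := fun x => c x Aᶜ with hg2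
  have hg2eq : ∀ x, g2 x = 1 - g x := fun x => by
    have := hprob x
    simpa [hg, hg2] using prob_compl_eq_one_sub (μ := c x) hA
  have hint2 : ∫⁻ x, g2 x ∂ν = ν Aᶜ := (hc.2.2.2 Aᶜ hA.compl).symm
  obtain ⟨ψ, ψm, ψle, hψ⟩ := exists_measurable_le_lintegral_eq ν g2
  have hψ1 : ∀ x, ψ x ≤ 1 := fun x => (ψle x).trans ((hg2eq x).le.trans tsub_le_self)
  set φ' : X → ℝ≥0∞ := fun x => 1 - ψ x with hφ'
  have φ'm : Measurable φ' := measurable_const.sub ψm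
  have hgφ' : ∀ x, g x ≤ φ' x := by
    intro x
    have h1 : ψ x + g x ≤ 1 := by
      calc ψ x + g x ≤ (1 - g x) + g x := by
            exact add_le_add_left ((ψle x).trans (hg2eq x).le) _
        _ = 1 := tsub_add_cancel_of_le (hgle x)
    exact ENNReal.le_sub_of_add_le_left (by exact (lt_of_le_of_lt (hψ1 x) (by norm_num)).ne) h1
  have hintφ' : ∫⁻ x, φ' x ∂ν = ν A := by
    have hsum : ∫⁻ x, φ' x ∂ν + ∫⁻ x, ψ x ∂ν = 1 := by
      rw [← lintegral_add_left φ'm]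
      have : ∀ x, φ' x + ψ x = 1 := fun x => tsub_add_cancel_of_le (hψ1 x)
      simp only [this]
      simp
    have hψint : ∫⁻ x, ψ x ∂ν = ν Aᶜ := hψ.symm.trans hint2
    have hcomp : ν Aᶜ = 1 - ν A := prob_compl_eq_one_sub hA
    rw [hψint, hcomp] at hsum
    have hA1 : ν A ≤ 1 := prob_le_one
    have : ∫⁻ x, φ' x ∂ν = 1 - (1 - ν A) :=
      ENNReal.eq_sub_of_add_eq (lt_of_le_of_lt tsub_le_self (by norm_num : (1:ℝ≥0∞) < ⊤)).ne hsum
    rw [this, ENNReal.sub_sub_cancel (by norm_num) hA1]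
  -- φ ≤ g ≤ φ', equal integrals
  have hintφ : ∫⁻ x, φ x ∂ν = ν A := hφ.symm.trans hint
  have hφfin : ∫⁻ x, φ x ∂ν ≠ ⊤ := by rw [hintφ]; exact (measure_lt_top ν A).ne
  have hle : ∀ x, φ x ≤ φ' x := fun x => (φle x).trans (hgφ' x)
  have hsub : ∫⁻ x, (φ' x - φ x) ∂ν = 0 := by
    rw [lintegral_sub φm hφfin (Filter.Eventually.of_forall hle), hintφ', hintφ, tsub_self]
  have haeeq : ∀ᵐ x ∂ν, φ' x - φ x = 0 :=
    (lintegral_eq_zero_iff (φ'm.sub φm)).mp hsub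
  refine ⟨φ, φm, ?_⟩
  filter_upwards [haeeq] with x hx
  have h1 : φ' x ≤ φ x := tsub_eq_zero_iff_le.mp hx
  exact le_antisymm ((hgφ' x).trans h1) (φle x)
/-- ae null fibers of a null set. -/
lemma cond_null [IsProbabilityMeasure ν] (hc : IsCondSystem ν F c)
    {N : Set X} (hN : MeasurableSet N) (hN0 : ν N = 0) : ∀ᵐ x ∂ν, c x N = 0 := by
  have := (lintegral_eq_zero_iff' (aemeas_cond hc hN)).mp (by rw [← hc.2.2.2 N hN]; exact hN0)
  exact this

/-- a.e. positivity of the conditional measure of the own cell. -/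
lemma cond_pos [IsProbabilityMeasure ν] (hc : IsCondSystem ν F c)
    {T : Set X} (hT : MeasurableSet T) : ∀ᵐ x ∂ν, x ∈ T → c x T ≠ 0 := by
  obtain ⟨φ, φm, hφ⟩ := aemeas_cond hc hT
  obtain ⟨N₀, hsub, hN₀m, hN₀0⟩ := exists_measurable_superset_of_null (ae_iff.mp hφ)
  set U : Set X := T ∩ {z | φ z = 0} with hU
  have hUm : MeasurableSet U := hT.inter (φm (measurableSet_singleton 0))
  have hptw : ∀ x, c x U ≤ c x N₀ := by
    intro x
    by_cases hcase : U ∩ F x ⊆ N₀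
    · calc c x U ≤ c x ((F x)ᶜ ∪ (U ∩ F x)) := measure_mono (by
          intro y hy; by_cases hyF : y ∈ F x
          · exact Or.inr ⟨hy, hyF⟩
          · exact Or.inl hyF)
      _ ≤ c x (F x)ᶜ + c x (U ∩ F x) := measure_union_le _ _
      _ ≤ 0 + c x N₀ := add_le_add (le_of_eq (hc.2.1 x)) (measure_mono hcase)
      _ = c x N₀ := by simp
    · obtain ⟨y, hyU, hyN⟩ := Set.not_subset.mp hcase
      have hcy : c y = c x := hc.2.2.1 x y hyU.2
      have hyT : c y T = φ y := by
        by_contra h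
        exact hyN (hsub h)
      have : c y T = 0 := hyT.trans hyU.1.2
      calc c x U = c y U := by rw [hcy]
        _ ≤ c y T := measure_mono Set.inter_subset_left
        _ = 0 := this
        _ ≤ c x N₀ := zero_le
  have hU0 : ν U = 0 := by
    have : ν U ≤ ν N₀ := by
      rw [hc.2.2.2 U hUm, hc.2.2.2 N₀ hN₀m]
      exact lintegral_mono hptw
    exact le_antisymm (this.trans hN₀0.le) (zero_le)
  have h1 : ∀ᵐ x ∂ν, x ∉ U := (measure_eq_zero_iff_ae_notMem.mp hU0)
  have h2 : ∀ᵐ x ∂ν, x ∉ N₀ := (measure_eq_zero_iff_ae_notMem.mp hN₀0)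
  filter_upwards [h1, h2] with x hx1 hx2 hxT
  have hcx : c x T = φ x := by
    by_contra h
    exact hx2 (hsub h)
  intro h0
  exact hx1 ⟨hxT, show φ x = 0 by rw [← hcx]; exact h0⟩

/-- fiber-integral is AEMeasurable and disintegrates, for measurable g. -/
lemma fiber_lintegral [IsProbabilityMeasure ν] (hc : IsCondSystem ν F c)
    {g : X → ℝ≥0∞} (hg : Measurable g) :
    AEMeasurable (fun x => ∫⁻ y, g y ∂(c x)) ν ∧
      ∫⁻ y, g y ∂ν = ∫⁻ x, ∫⁻ y, g y ∂(c x) ∂ν := by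
  refine Measurable.ennreal_induction (motive := fun g =>
    AEMeasurable (fun x => ∫⁻ y, g y ∂(c x)) ν ∧
      ∫⁻ y, g y ∂ν = ∫⁻ x, ∫⁻ y, g y ∂(c x) ∂ν) ?_ ?_ ?_ hg
  · intro r s hs
    have h1 : (fun x => ∫⁻ y, s.indicator (fun _ => r) y ∂(c x)) = fun x => r * c x s := by
      funext x; exact lintegral_indicator_const hs r
    rw [h1]
    constructor
    · exact (aemeas_cond hc hs).const_mul r
    · rw [lintegral_indicator_const hs r, hc.2.2.2 s hs, ← lintegral_const_mul'' r (aemeas_cond hc hs)]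
  · rintro p q _hd hp hq ⟨hpa, hpe⟩ ⟨hqa, hqe⟩
    have h1 : (fun x => ∫⁻ y, (p + q) y ∂(c x))
        = fun x => (∫⁻ y, p y ∂(c x)) + ∫⁻ y, q y ∂(c x) := by
      funext x; exact lintegral_add_left hp _
    rw [h1]
    refine ⟨hpa.add hqa, ?_⟩
    calc ∫⁻ y, (p + q) y ∂ν = (∫⁻ y, p y ∂ν) + ∫⁻ y, q y ∂ν := lintegral_add_left hp _
      _ = (∫⁻ x, ∫⁻ y, p y ∂(c x) ∂ν) + ∫⁻ x, ∫⁻ y, q y ∂(c x) ∂ν := by rw [hpe, hqe]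
      _ = ∫⁻ x, ((∫⁻ y, p y ∂(c x)) + ∫⁻ y, q y ∂(c x)) ∂ν := (lintegral_add_left' hpa _).symm
  · intro fs hfm hfmono hP
    have h1 : (fun x => ∫⁻ y, (⨆ n, fs n y) ∂(c x))
        = fun x => ⨆ n, ∫⁻ y, fs n y ∂(c x) := by
      funext x; exact lintegral_iSup hfm hfmono
    rw [h1]
    refine ⟨AEMeasurable.iSup (fun n => (hP n).1), ?_⟩
    calc ∫⁻ y, (⨆ n, fs n y) ∂ν = ⨆ n, ∫⁻ y, fs n y ∂ν := lintegral_iSup hfm hfmono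
      _ = ⨆ n, ∫⁻ x, ∫⁻ y, fs n y ∂(c x) ∂ν := by simp only [fun n => (hP n).2]
      _ = ∫⁻ x, ⨆ n, ∫⁻ y, fs n y ∂(c x) ∂ν := by
          refine (lintegral_iSup' (fun n => (hP n).1) (Filter.Eventually.of_forall ?_)).symm
          intro x n m hnm
          exact lintegral_mono fun y => hfmono hnm y

section Partition

variable {P : Finset (Set X)} {f : X → X}

lemma pElem_eq (hPd : (↑P : Set (Set X)).Pairwise Disjoint)
    {A : Set X} (hA : A ∈ P) {x : X} (hx : x ∈ A) : pElem P x = A := by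
  unfold pElem
  have : {A' : Set X | A' ∈ P ∧ x ∈ A'} = {A} := by
    ext A'
    simp only [Set.mem_setOf_eq, Set.mem_singleton_iff]
    constructor
    · rintro ⟨hA', hxA'⟩
      by_contra hne
      exact (hPd hA' hA hne).ne_of_mem hxA' hx rfl
    · rintro rfl; exact ⟨hA, hx⟩
  rw [this, Set.sUnion_singleton]

lemma exists_pmem (hPc : ⋃₀ (↑P : Set (Set X)) = Set.univ) (x : X) : ∃ A ∈ P, x ∈ A := by
  have : x ∈ ⋃₀ (↑P : Set (Set X)) := hPc ▸ Set.mem_univ x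
  obtain ⟨A, hA, hxA⟩ := this
  exact ⟨A, hA, hxA⟩

lemma pElem_mem (hPc : ⋃₀ (↑P : Set (Set X)) = Set.univ)
    (hPd : (↑P : Set (Set X)).Pairwise Disjoint) (x : X) : pElem P x ∈ P := by
  obtain ⟨A, hA, hxA⟩ := exists_pmem hPc x
  rw [pElem_eq hPd hA hxA]; exact hA

lemma mem_pElem (hPc : ⋃₀ (↑P : Set (Set X)) = Set.univ)
    (hPd : (↑P : Set (Set X)).Pairwise Disjoint) (x : X) : x ∈ pElem P x := by
  obtain ⟨A, hA, hxA⟩ := exists_pmem hPc x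
  rw [pElem_eq hPd hA hxA]; exact hxA

/-- cylinder set for an itinerary -/
def Sset (f : X → X) (P : Finset (Set X)) (m : ℕ) (τ : Fin m → ↥P) : Set X :=
  ⋂ j : Fin m, f^[(j : ℕ)] ⁻¹' (τ j : Set X)

lemma Sset_measurable (hf : Measurable f) (hPmeas : ∀ A ∈ P, MeasurableSet A)
    {m : ℕ} (τ : Fin m → ↥P) : MeasurableSet (Sset f P m τ) :=
  MeasurableSet.iInter fun j => (hf.iterate (j : ℕ)) (hPmeas _ (τ j).2)

/-- itinerary of a point -/
def itin (f : X → X) (P : Finset (Set X)) (hm : ∀ x, pElem P x ∈ P) (m : ℕ) (x : X) :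
    Fin m → ↥P := fun j => ⟨pElem P (f^[(j : ℕ)] x), hm _⟩

variable (hPc : ⋃₀ (↑P : Set (Set X)) = Set.univ)
  (hPd : (↑P : Set (Set X)).Pairwise Disjoint)

lemma mem_Sset_itin {m : ℕ} (x : X) :
    x ∈ Sset f P m (itin f P (pElem_mem hPc hPd) m x) := by
  refine Set.mem_iInter.mpr fun j => ?_
  exact mem_pElem hPc hPd _

lemma itin_eq_of_mem {m : ℕ} {τ : Fin m → ↥P} {x : X} (hx : x ∈ Sset f P m τ) :
    τ = itin f P (pElem_mem hPc hPd) m x := by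
  funext j
  refine Subtype.ext ?_
  exact (pElem_eq hPd (τ j).2 (Set.mem_iInter.mp hx j)).symm

lemma biInter_eq_Sset {m : ℕ} (x : X) :
    (⋂ j < m, f^[j] ⁻¹' pElem P (f^[j] x))
      = Sset f P m (itin f P (pElem_mem hPc hPd) m x) := by
  ext y
  simp only [Set.mem_iInter, Sset, itin, Set.mem_preimage]
  exact ⟨fun h j => h (j : ℕ) j.2, fun h j hj => h ⟨j, hj⟩⟩

include hPc hPd in
lemma sum_measure_Sset (μ : Measure X) (hf : Measurable f)
    (hPmeas : ∀ A ∈ P, MeasurableSet A) (m : ℕ) :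
    ∑ τ : Fin m → ↥P, μ (Sset f P m τ) = μ Set.univ := by
  have hdisj : Pairwise (Function.onFun Disjoint (Sset f P m)) := by
    intro τ τ' hne
    refine Set.disjoint_left.mpr fun x hx hx' => ?_
    exact hne ((itin_eq_of_mem hPc hPd hx).trans (itin_eq_of_mem hPc hPd hx').symm)
  have hcover : (⋃ τ : Fin m → ↥P, Sset f P m τ) = Set.univ := by
    refine Set.eq_univ_of_forall fun x => Set.mem_iUnion.mpr ?_
    exact ⟨_, mem_Sset_itin hPc hPd x⟩
  rw [← hcover, measure_iUnion hdisj (fun τ => Sset_measurable hf hPmeas τ), tsum_fintype]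

end Partition

section Step

variable {P : Finset (Set X)} {f : X → X} {Gp Bp : X → Set X} {cγ cβ : X → Measure X}

lemma ae_comp_iterate (hinv : MeasurePreserving f ν ν)
    {Q : X → Prop} (hQ : ∀ᵐ y ∂ν, Q y) (i : ℕ) : ∀ᵐ x ∂ν, Q (f^[i] x) := by
  obtain ⟨N, hsub, hNm, hN0⟩ := exists_measurable_superset_of_null (ae_iff.mp hQ)
  refine ae_iff.mpr (le_antisymm ?_ (zero_le))
  calc ν {x | ¬ Q (f^[i] x)} ≤ ν (f^[i] ⁻¹' N) := measure_mono fun x hx => hsub hx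
    _ = ν N := (hinv.iterate i).measure_preimage hNm.nullMeasurableSet
    _ = 0 := hN0

/-- the measure of the `m`-cylinder containing `x`, under the conditional at `x` -/
noncomputable def cellFn (f : X → X) (P : Finset (Set X)) (hm : ∀ x : X, pElem P x ∈ P)
    (c : X → Measure X) (m : ℕ) : X → ℝ≥0∞ :=
  fun x => c x (Sset f P m (itin f P hm m x))

variable (hPc : ⋃₀ (↑P : Set (Set X)) = Set.univ)
  (hPd : (↑P : Set (Set X)).Pairwise Disjoint)

include hPc hPd in
lemma aemeas_cellFn [IsProbabilityMeasure ν] (hc : IsCondSystem ν F c) (hf : Measurable f)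
    (hPmeas : ∀ A ∈ P, MeasurableSet A) (m : ℕ) :
    AEMeasurable (cellFn f P (pElem_mem hPc hPd) c m) ν := by
  have heq : cellFn f P (pElem_mem hPc hPd) c m
      = fun x => ∑ τ : Fin m → ↥P, (Sset f P m τ).indicator (fun x' => c x' (Sset f P m τ)) x := by
    funext x
    rw [Finset.sum_eq_single (itin f P (pElem_mem hPc hPd) m x)]
    · rw [Set.indicator_of_mem (mem_Sset_itin hPc hPd x)]; rfl
    · intro τ _ hne
      exact Set.indicator_of_notMem (fun hx => hne (itin_eq_of_mem hPc hPd hx)) _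
    · intro h; exact absurd (Finset.mem_univ _) h
  rw [heq]
  exact Finset.aemeasurable_fun_sum _ fun τ _ =>
    ((aemeas_cond hc (Sset_measurable hf hPmeas τ)).indicator (Sset_measurable hf hPmeas τ))

include hPc hPd in
lemma aemeas_pElemFn [IsProbabilityMeasure ν] (hc : IsCondSystem ν F c)
    (hPmeas : ∀ A ∈ P, MeasurableSet A) :
    AEMeasurable (fun y => c y (pElem P y)) ν := by
  have heq : (fun y => c y (pElem P y))
      = fun y => ∑ A : ↥P, (↑A : Set X).indicator (fun y' => c y' ↑A) y := by
    funext y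
    rw [Finset.sum_eq_single (⟨pElem P y, pElem_mem hPc hPd y⟩ : ↥P)]
    · rw [Set.indicator_of_mem (mem_pElem hPc hPd y)]
    · intro A _ hne
      refine Set.indicator_of_notMem (fun hy => hne ?_) _
      exact Subtype.ext (pElem_eq hPd A.2 hy).symm
    · intro h; exact absurd (Finset.mem_univ _) h
  rw [heq]
  exact Finset.aemeasurable_fun_sum _ fun A _ =>
    ((aemeas_cond hc (hPmeas _ A.2)).indicator (hPmeas _ A.2))

include hPc hPd in
lemma sum_measure_partition (hPmeas : ∀ A ∈ P, MeasurableSet A)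
    (μ : Measure X) [IsProbabilityMeasure μ] :
    ∑ A : ↥P, μ (↑A : Set X) = 1 := by
  have hdisj : Pairwise (Function.onFun Disjoint (fun A : ↥P => (↑A : Set X))) := by
    intro A A' hne
    exact hPd A.2 A'.2 (fun h => hne (Subtype.ext h))
  have hcover : (⋃ A : ↥P, (↑A : Set X)) = Set.univ := by
    rw [← hPc]
    ext x
    simp only [Set.mem_iUnion, Set.mem_sUnion, Finset.mem_coe, Subtype.exists]
    exact ⟨fun ⟨A, hA, hx⟩ => ⟨A, hA, hx⟩, fun ⟨A, hA, hx⟩ => ⟨A, hA, hx⟩⟩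
  rw [← measure_univ (μ := μ), ← hcover,
    measure_iUnion hdisj (fun A => hPmeas _ A.2), tsum_fintype]

lemma Sset_snoc {i : ℕ} (τ : Fin i → ↥P) (A : ↥P) :
    Sset f P (i+1) (Fin.snoc τ A) = Sset f P i τ ∩ f^[i] ⁻¹' (↑A : Set X) := by
  ext y
  simp only [Sset, Set.mem_iInter, Set.mem_inter_iff, Set.mem_preimage]
  constructor
  · intro h
    refine ⟨fun j => ?_, ?_⟩
    · have := h (Fin.castSucc j)
      rwa [Fin.snoc_castSucc, Fin.coe_castSucc] at this
    · have := h (Fin.last i)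
      rwa [Fin.snoc_last, Fin.val_last] at this
  · rintro ⟨h1, h2⟩ j
    induction j using Fin.lastCases with
    | last => rwa [Fin.snoc_last, Fin.val_last]
    | cast j => rw [Fin.snoc_castSucc, Fin.coe_castSucc]; exact h1 j


include hPc hPd in
lemma key_bound [IsProbabilityMeasure ν] (hf : Measurable f)
    (hinv : MeasurePreserving f ν ν)
    (hPmeas : ∀ A ∈ P, MeasurableSet A)
    (hγ : IsCondSystem ν Gp cγ) (hβ : IsCondSystem ν Bp cβ)
    (i : ℕ)
    (hrefine : ∀ x : X, f^[i] '' ((⋂ j < i, f^[j] ⁻¹' pElem P (f^[j] x)) ∩ Gp x) ⊆ Bp (f^[i] x)) :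
    ∫⁻ x, (cβ (f^[i] x) (pElem P (f^[i] x))) * cellFn f P (pElem_mem hPc hPd) cγ i x
       / cellFn f P (pElem_mem hPc hPd) cγ (i+1) x ∂ν ≤ 1 := by
  set hm := pElem_mem hPc hPd with hhm
  set a := cellFn f P hm cγ i with ha_def
  set b := cellFn f P hm cγ (i+1) with hb_def
  set s : X → ℝ≥0∞ := fun x => cβ (f^[i] x) (pElem P (f^[i] x)) with hs_def
  have hsa : AEMeasurable s ν :=
    (aemeas_pElemFn hPc hPd hβ hPmeas).comp_quasiMeasurePreserving
      (hinv.iterate i).quasiMeasurePreserving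
  have hg : AEMeasurable (fun x => s x * a x / b x) ν :=
    (hsa.mul (aemeas_cellFn hPc hPd hγ hf hPmeas i)).div
      (aemeas_cellFn hPc hPd hγ hf hPmeas (i+1))
  set g' := hg.mk _ with hg'_def
  have g'm : Measurable g' := hg.measurable_mk
  have hgg' : (fun x => s x * a x / b x) =ᵐ[ν] g' := hg.ae_eq_mk
  obtain ⟨N, hsubN, hNm, hN0⟩ := exists_measurable_superset_of_null (ae_iff.mp hgg')
  have hfibN : ∀ᵐ x ∂ν, cγ x N = 0 := cond_null hγ hNm hN0
  have hfiber : ∀ᵐ x ∂ν, (∫⁻ y, g' y ∂(cγ x)) ≤ 1 := by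
    filter_upwards [hfibN] with x hxN
    haveI : IsProbabilityMeasure (cγ x) := hγ.1 x
    -- decompose over cylinders of length i+1
    have hdec : ∫⁻ y, g' y ∂(cγ x)
        = ∑ ω : Fin (i+1) → ↥P, ∫⁻ y in Sset f P (i+1) ω, g' y ∂(cγ x) := by
      have hptw : g' = fun y => ∑ ω : Fin (i+1) → ↥P, (Sset f P (i+1) ω).indicator g' y := by
        funext y
        rw [Finset.sum_eq_single (itin f P hm (i+1) y)]
        · rw [Set.indicator_of_mem (mem_Sset_itin hPc hPd y)]
        · intro ω _ hne
          exact Set.indicator_of_notMem (fun hy => hne (itin_eq_of_mem hPc hPd hy)) _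
        · intro h; exact absurd (Finset.mem_univ _) h
      conv_lhs => rw [hptw]
      rw [lintegral_finset_sum _ (fun ω _ => g'm.indicator (Sset_measurable hf hPmeas ω))]
      exact Finset.sum_congr rfl fun ω _ => lintegral_indicator (Sset_measurable hf hPmeas ω) _
    rw [hdec, ← Equiv.sum_comp (Fin.snocEquiv (fun _ => ↥P))
      (fun ω => ∫⁻ y in Sset f P (i+1) ω, g' y ∂(cγ x)), Fintype.sum_prod_type]
    have hsnoc : ∀ (A : ↥P) (τ : Fin i → ↥P),
        (Fin.snocEquiv (fun _ => ↥P)) (A, τ) = Fin.snoc τ A := by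
      intro A τ; funext j; rfl
    -- bound the inner sums
    have hτbound : ∀ τ : Fin i → ↥P,
        ∑ A : ↥P, ∫⁻ y in Sset f P (i+1) (Fin.snoc τ A), g' y ∂(cγ x)
          ≤ cγ x (Sset f P i τ) := by
      intro τ
      by_cases haτ : cγ x (Sset f P i τ) = 0
      · have hz : ∀ A : ↥P, ∫⁻ y in Sset f P (i+1) (Fin.snoc τ A), g' y ∂(cγ x) = 0 := by
          intro A
          refine setLIntegral_measure_zero _ _ (le_antisymm ?_ (zero_le))
          rw [Sset_snoc]
          exact (measure_mono Set.inter_subset_left).trans haτ.le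
        simp only [hz, Finset.sum_const_zero]
        exact zero_le
      · -- pick a base point in the cell
        have hne : (Sset f P i τ ∩ Gp x).Nonempty := by
          rw [Set.nonempty_iff_ne_empty]
          intro hemp
          have hsub : Sset f P i τ ⊆ (Gp x)ᶜ := by
            intro y hy hyG
            exact Set.eq_empty_iff_forall_notMem.mp hemp y ⟨hy, hyG⟩
          exact haτ ((le_antisymm ((measure_mono hsub).trans (hγ.2.1 x).le) (zero_le)))
        obtain ⟨x', hx'S, hx'G⟩ := hne
        have hcgx' : cγ x' = cγ x := hγ.2.2.1 x x' hx'G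
        have hGx'null : cγ x (Gp x')ᶜ = 0 := by rw [← hcgx']; exact hγ.2.1 x'
        set μτ := cβ (f^[i] x') with hμτ
        haveI : IsProbabilityMeasure μτ := hβ.1 _
        have hconst : ∀ y, y ∈ Sset f P i τ → y ∈ Gp x' → cβ (f^[i] y) = μτ := by
          intro y hyS hyG
          refine hβ.2.2.1 _ _ (hrefine x' ⟨y, ⟨?_, hyG⟩, rfl⟩)
          rw [biInter_eq_Sset hPc hPd x', ← itin_eq_of_mem hPc hPd hx'S]
          exact hyS
        have hbound : ∀ A : ↥P,
            ∫⁻ y in Sset f P (i+1) (Fin.snoc τ A), g' y ∂(cγ x)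
              ≤ μτ ↑A * cγ x (Sset f P i τ) := by
          intro A
          by_cases hbω : cγ x (Sset f P (i+1) (Fin.snoc τ A)) = 0
          · rw [setLIntegral_measure_zero _ _ hbω]; exact zero_le
          · have hae : ∀ᵐ y ∂((cγ x).restrict (Sset f P (i+1) (Fin.snoc τ A))),
                g' y = μτ ↑A * cγ x (Sset f P i τ) / cγ x (Sset f P (i+1) (Fin.snoc τ A)) := by
              have hN' : ∀ᵐ y ∂(cγ x), y ∉ N := measure_eq_zero_iff_ae_notMem.mp hxN
              have hGx : ∀ᵐ y ∂(cγ x), y ∈ Gp x := by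
                have := measure_eq_zero_iff_ae_notMem.mp (hγ.2.1 x)
                filter_upwards [this] with y hy
                simpa using hy
              have hGx' : ∀ᵐ y ∂(cγ x), y ∈ Gp x' := by
                have := measure_eq_zero_iff_ae_notMem.mp hGx'null
                filter_upwards [this] with y hy
                simpa using hy
              rw [ae_restrict_iff' (Sset_measurable hf hPmeas _)]
              filter_upwards [hN', hGx, hGx'] with y hyN hyG hyG' hyS
              have hgy : g' y = s y * a y / b y := by
                by_contra h
                exact hyN (hsubN (fun h' => h h'.symm))
              have hyS' : y ∈ Sset f P i τ := ((Sset_snoc τ A) ▸ hyS).1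
              have hyA : f^[i] y ∈ (↑A : Set X) := ((Sset_snoc τ A) ▸ hyS).2
              have hcgy : cγ y = cγ x := hγ.2.2.1 x y hyG
              have hay : a y = cγ x (Sset f P i τ) := by
                rw [ha_def]
                show cγ y (Sset f P i (itin f P hm i y)) = _
                rw [hcgy, ← itin_eq_of_mem hPc hPd hyS']
              have hby : b y = cγ x (Sset f P (i+1) (Fin.snoc τ A)) := by
                rw [hb_def]
                show cγ y (Sset f P (i+1) (itin f P hm (i+1) y)) = _
                rw [hcgy, ← itin_eq_of_mem hPc hPd hyS]
              have hsy : s y = μτ ↑A := by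
                rw [hs_def]
                show cβ (f^[i] y) (pElem P (f^[i] y)) = _
                rw [hconst y hyS' hyG', pElem_eq hPd A.2 hyA]
              rw [hgy, hay, hby, hsy]
            calc ∫⁻ y in Sset f P (i+1) (Fin.snoc τ A), g' y ∂(cγ x)
                = ∫⁻ _y in Sset f P (i+1) (Fin.snoc τ A),
                    (μτ ↑A * cγ x (Sset f P i τ) / cγ x (Sset f P (i+1) (Fin.snoc τ A)))
                    ∂(cγ x) := lintegral_congr_ae hae
              _ = μτ ↑A * cγ x (Sset f P i τ) / cγ x (Sset f P (i+1) (Fin.snoc τ A))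
                    * cγ x (Sset f P (i+1) (Fin.snoc τ A)) := setLIntegral_const _ _
              _ = μτ ↑A * cγ x (Sset f P i τ) :=
                  ENNReal.div_mul_cancel hbω (measure_ne_top _ _)
              _ ≤ μτ ↑A * cγ x (Sset f P i τ) := le_rfl
        calc ∑ A : ↥P, ∫⁻ y in Sset f P (i+1) (Fin.snoc τ A), g' y ∂(cγ x)
            ≤ ∑ A : ↥P, μτ ↑A * cγ x (Sset f P i τ) :=
              Finset.sum_le_sum fun A _ => hbound A
          _ = (∑ A : ↥P, μτ ↑A) * cγ x (Sset f P i τ) := by rw [Finset.sum_mul]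
          _ = 1 * cγ x (Sset f P i τ) := by rw [sum_measure_partition hPc hPd hPmeas μτ]
          _ = cγ x (Sset f P i τ) := one_mul _
    calc ∑ A : ↥P, ∑ τ : Fin i → ↥P,
          ∫⁻ y in Sset f P (i+1) ((Fin.snocEquiv (fun _ => ↥P)) (A, τ)), g' y ∂(cγ x)
        = ∑ τ : Fin i → ↥P, ∑ A : ↥P,
            ∫⁻ y in Sset f P (i+1) (Fin.snoc τ A), g' y ∂(cγ x) := by
          rw [Finset.sum_comm]
          exact Finset.sum_congr rfl fun τ _ => Finset.sum_congr rfl fun A _ => by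
            rw [hsnoc]
      _ ≤ ∑ τ : Fin i → ↥P, cγ x (Sset f P i τ) := Finset.sum_le_sum fun τ _ => hτbound τ
      _ = cγ x Set.univ := sum_measure_Sset hPc hPd (cγ x) hf hPmeas i
      _ = 1 := measure_univ
  calc ∫⁻ x, s x * a x / b x ∂ν = ∫⁻ x, g' x ∂ν := lintegral_congr_ae hgg'
    _ = ∫⁻ x, ∫⁻ y, g' y ∂(cγ x) ∂ν := (fiber_lintegral hγ g'm).2
    _ ≤ ∫⁻ _x, 1 ∂ν := lintegral_mono_ae hfiber
    _ = 1 := by simp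


lemma ofReal_add_eq {u v w : ℝ} (h : u = v + w) (hu : 0 ≤ u) (hv : 0 ≤ v) :
    ENNReal.ofReal u + ENNReal.ofReal (-w) = ENNReal.ofReal v + ENNReal.ofReal w := by
  rcases le_or_gt 0 w with hw | hw
  · rw [ENNReal.ofReal_of_nonpos (neg_nonpos.mpr hw), add_zero, h, ENNReal.ofReal_add hv hw]
  · rw [ENNReal.ofReal_of_nonpos hw.le, add_zero, ← ENNReal.ofReal_add hu
      (by linarith : (0:ℝ) ≤ -w)]
    congr 1
    linarith

include hPc hPd in
lemma entropy_step [IsProbabilityMeasure ν] (hf : Measurable f)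
    (hinv : MeasurePreserving f ν ν)
    (hPmeas : ∀ A ∈ P, MeasurableSet A)
    (hγ : IsCondSystem ν Gp cγ) (hβ : IsCondSystem ν Bp cβ)
    (i : ℕ)
    (hrefine : ∀ x : X, f^[i] '' ((⋂ j < i, f^[j] ⁻¹' pElem P (f^[j] x)) ∩ Gp x) ⊆ Bp (f^[i] x))
    (hβfin : condEntropyPart ν P cβ ≠ ⊤) :
    condEntropyJoin ν f P cγ (i+1) ≤ condEntropyJoin ν f P cγ i + condEntropyPart ν P cβ := by
  have houter : Measurable (fun t : ℝ≥0∞ => ENNReal.ofReal (-Real.log t.toReal)) :=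
    ENNReal.measurable_ofReal.comp
      ((Real.measurable_log.comp ENNReal.measurable_toReal).neg)
  set hm := pElem_mem hPc hPd with hhm
  set a := cellFn f P hm cγ i with ha_def
  set b := cellFn f P hm cγ (i+1) with hb_def
  set s : X → ℝ≥0∞ := fun x => cβ (f^[i] x) (pElem P (f^[i] x)) with hs_def
  have haa : AEMeasurable a ν := aemeas_cellFn hPc hPd hγ hf hPmeas i
  have hba : AEMeasurable b ν := aemeas_cellFn hPc hPd hγ hf hPmeas (i+1)
  have hsa : AEMeasurable s ν :=
    (aemeas_pElemFn hPc hPd hβ hPmeas).comp_quasiMeasurePreserving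
      (hinv.iterate i).quasiMeasurePreserving
  have hart : AEMeasurable (fun x => (a x).toReal) ν :=
    ENNReal.measurable_toReal.comp_aemeasurable haa
  have hbrt : AEMeasurable (fun x => (b x).toReal) ν :=
    ENNReal.measurable_toReal.comp_aemeasurable hba
  have hsrt : AEMeasurable (fun x => (s x).toReal) ν :=
    ENNReal.measurable_toReal.comp_aemeasurable hsa
  -- join entropies as integrals of cell functions
  have hEi : condEntropyJoin ν f P cγ i
      = ∫⁻ x, ENNReal.ofReal (-Real.log (a x).toReal) ∂ν := by
    refine lintegral_congr fun x => ?_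
    rw [ha_def]
    show ENNReal.ofReal (-Real.log ((cγ x (⋂ j < i, f^[j] ⁻¹' pElem P (f^[j] x))).toReal)) = _
    rw [biInter_eq_Sset hPc hPd x]
    rfl
  have hEi1 : condEntropyJoin ν f P cγ (i+1)
      = ∫⁻ x, ENNReal.ofReal (-Real.log (b x).toReal) ∂ν := by
    refine lintegral_congr fun x => ?_
    rw [hb_def]
    show ENNReal.ofReal (-Real.log ((cγ x (⋂ j < i+1, f^[j] ⁻¹' pElem P (f^[j] x))).toReal)) = _
    rw [biInter_eq_Sset hPc hPd x]
    rfl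
  -- T-integral equals condEntropyPart via invariance
  have hTint : ∫⁻ x, ENNReal.ofReal (-Real.log (s x).toReal) ∂ν = condEntropyPart ν P cβ := by
    set F : X → ℝ≥0∞ := fun y => ENNReal.ofReal (-Real.log ((cβ y (pElem P y)).toReal))
      with hF_def
    have hFae : AEMeasurable F ν :=
      houter.comp_aemeasurable (aemeas_pElemFn hPc hPd hβ hPmeas)
    have hmap : Measure.map (f^[i]) ν = ν := (hinv.iterate i).map_eq
    calc ∫⁻ x, ENNReal.ofReal (-Real.log (s x).toReal) ∂ν
        = ∫⁻ x, F (f^[i] x) ∂ν := rfl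
      _ = ∫⁻ y, F y ∂(Measure.map (f^[i]) ν) :=
          (lintegral_map' (by rwa [hmap]) (hf.iterate i).aemeasurable).symm
      _ = condEntropyPart ν P cβ := by rw [hmap]; rfl
  -- almost-everywhere positivity
  have hbpos : ∀ᵐ x ∂ν, b x ≠ 0 := by
    have hall : ∀ᵐ x ∂ν, ∀ ω : Fin (i+1) → ↥P,
        x ∈ Sset f P (i+1) ω → cγ x (Sset f P (i+1) ω) ≠ 0 := by
      rw [ae_all_iff]
      exact fun ω => cond_pos hγ (Sset_measurable hf hPmeas ω)
    filter_upwards [hall] with x hx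
    exact hx _ (mem_Sset_itin hPc hPd x)
  have hspos : ∀ᵐ x ∂ν, s x ≠ 0 := by
    have hbase : ∀ᵐ y ∂ν, cβ y (pElem P y) ≠ 0 := by
      have hall : ∀ᵐ y ∂ν, ∀ A : ↥P, y ∈ (↑A : Set X) → cβ y ↑A ≠ 0 := by
        rw [ae_all_iff]
        exact fun A => cond_pos hβ (hPmeas _ A.2)
      filter_upwards [hall] with y hy
      exact hy ⟨pElem P y, pElem_mem hPc hPd y⟩ (mem_pElem hPc hPd y)
    exact ae_comp_iterate hinv hbase i
  -- pointwise bounds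
  have hb_le_a : ∀ x, b x ≤ a x := by
    intro x
    refine measure_mono ?_
    intro y hy
    exact Set.mem_iInter.mpr fun j =>
      Set.mem_iInter.mp hy (⟨(j : ℕ), Nat.lt_succ_of_lt j.2⟩ : Fin (i+1))
  have ha1 : ∀ x, a x ≤ 1 := fun x => by
    haveI : IsProbabilityMeasure (cγ x) := hγ.1 x; exact prob_le_one
  have hs1 : ∀ x, s x ≤ 1 := fun x => by
    haveI : IsProbabilityMeasure (cβ (f^[i] x)) := hβ.1 _; exact prob_le_one
  have hatop : ∀ x, a x ≠ ⊤ := fun x => (lt_of_le_of_lt (ha1 x) ENNReal.one_lt_top).ne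
  have hbtop : ∀ x, b x ≠ ⊤ := fun x =>
    (lt_of_le_of_lt ((hb_le_a x).trans (ha1 x)) ENNReal.one_lt_top).ne
  have hstop : ∀ x, s x ≠ ⊤ := fun x => (lt_of_le_of_lt (hs1 x) ENNReal.one_lt_top).ne
  -- key bound
  have hKEY : ∫⁻ x, s x * a x / b x ∂ν ≤ 1 :=
    key_bound hPc hPd hf hinv hPmeas hγ hβ i hrefine
  -- derived functions
  set U : X → ℝ≥0∞ := fun x => ENNReal.ofReal (Real.log ((a x).toReal / (b x).toReal))
    with hU_def
  set hr : X → ℝ := fun x => (s x).toReal * (a x).toReal / (b x).toReal with hhr_def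
  set Km : X → ℝ≥0∞ := fun x => ENNReal.ofReal (-Real.log (hr x)) with hKm_def
  set Kp : X → ℝ≥0∞ := fun x => ENNReal.ofReal (Real.log (hr x)) with hKp_def
  set T : X → ℝ≥0∞ := fun x => ENNReal.ofReal (-Real.log (s x).toReal) with hT_def
  have hUa : AEMeasurable U ν :=
    ENNReal.measurable_ofReal.comp_aemeasurable
      (Real.measurable_log.comp_aemeasurable (hart.div hbrt))
  have hhra : AEMeasurable hr ν := (hsrt.mul hart).div hbrt
  have hKma : AEMeasurable Km ν :=
    ENNReal.measurable_ofReal.comp_aemeasurable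
      ((Real.measurable_log.comp_aemeasurable hhra).neg)
  have hKpa : AEMeasurable Kp ν :=
    ENNReal.measurable_ofReal.comp_aemeasurable
      (Real.measurable_log.comp_aemeasurable hhra)
  have hTa : AEMeasurable T ν := houter.comp_aemeasurable hsa
  -- pointwise a.e. identities
  have hmain : ∀ᵐ x ∂ν, ENNReal.ofReal (-Real.log (b x).toReal)
      = ENNReal.ofReal (-Real.log (a x).toReal) + U x := by
    filter_upwards [hbpos] with x hb0
    have hbr : 0 < (b x).toReal := ENNReal.toReal_pos hb0 (hbtop x)
    have harle : (b x).toReal ≤ (a x).toReal := ENNReal.toReal_mono (hatop x) (hb_le_a x)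
    have har : 0 < (a x).toReal := lt_of_lt_of_le hbr harle
    have ha1' : (a x).toReal ≤ 1 := by
      have := ENNReal.toReal_mono ENNReal.one_ne_top (ha1 x)
      simpa using this
    have hlog : -Real.log (b x).toReal
        = -Real.log (a x).toReal + Real.log ((a x).toReal / (b x).toReal) := by
      rw [Real.log_div har.ne' hbr.ne']; ring
    rw [hlog, ENNReal.ofReal_add (neg_nonneg.mpr (Real.log_nonpos har.le ha1'))
      (Real.log_nonneg ((one_le_div hbr).mpr harle))]
  have hid2 : ∀ᵐ x ∂ν, U x + Km x = T x + Kp x := by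
    filter_upwards [hbpos, hspos] with x hb0 hs0
    have hbr : 0 < (b x).toReal := ENNReal.toReal_pos hb0 (hbtop x)
    have harle : (b x).toReal ≤ (a x).toReal := ENNReal.toReal_mono (hatop x) (hb_le_a x)
    have har : 0 < (a x).toReal := lt_of_lt_of_le hbr harle
    have hsr : 0 < (s x).toReal := ENNReal.toReal_pos hs0 (hstop x)
    have hs1' : (s x).toReal ≤ 1 := by
      have := ENNReal.toReal_mono ENNReal.one_ne_top (hs1 x)
      simpa using this
    have hlogm : Real.log (hr x) = Real.log (s x).toReal
        + Real.log ((a x).toReal / (b x).toReal) := by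
      rw [hhr_def]
      show Real.log ((s x).toReal * (a x).toReal / (b x).toReal) = _
      rw [mul_div_assoc, Real.log_mul hsr.ne' (div_pos har hbr).ne']
    exact ofReal_add_eq (by rw [hlogm]; ring)
      (Real.log_nonneg ((one_le_div hbr).mpr harle))
      (neg_nonneg.mpr (Real.log_nonpos hsr.le hs1'))
  have hid3 : ∀ᵐ x ∂ν, Kp x + 1 ≤ Km x + ENNReal.ofReal (hr x) := by
    filter_upwards [hbpos, hspos] with x hb0 hs0
    have hbr : 0 < (b x).toReal := ENNReal.toReal_pos hb0 (hbtop x)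
    have harle : (b x).toReal ≤ (a x).toReal := ENNReal.toReal_mono (hatop x) (hb_le_a x)
    have har : 0 < (a x).toReal := lt_of_lt_of_le hbr harle
    have hsr : 0 < (s x).toReal := ENNReal.toReal_pos hs0 (hstop x)
    have hrpos : 0 < hr x := div_pos (mul_pos hsr har) hbr
    have hlog1 : Real.log (hr x) ≤ hr x - 1 := Real.log_le_sub_one_of_pos hrpos
    rcases le_or_gt 0 (Real.log (hr x)) with hc | hc
    · calc Kp x + 1 = ENNReal.ofReal (Real.log (hr x) + 1) := by
            rw [ENNReal.ofReal_add hc zero_le_one, ENNReal.ofReal_one]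
        _ ≤ ENNReal.ofReal (hr x) := ENNReal.ofReal_le_ofReal (by linarith)
        _ ≤ Km x + ENNReal.ofReal (hr x) := le_add_self
    · have hKp0 : Kp x = 0 := ENNReal.ofReal_of_nonpos hc.le
      rw [hKp0, zero_add]
      calc (1:ℝ≥0∞) = ENNReal.ofReal 1 := ENNReal.ofReal_one.symm
        _ ≤ ENNReal.ofReal (-Real.log (hr x) + hr x) :=
            ENNReal.ofReal_le_ofReal (by linarith)
        _ = Km x + ENNReal.ofReal (hr x) := ENNReal.ofReal_add (by linarith) hrpos.le
  have hid4 : ∀ᵐ x ∂ν, ENNReal.ofReal (hr x) = s x * a x / b x := by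
    filter_upwards [hbpos] with x hb0
    have hgne : s x * a x / b x ≠ ⊤ :=
      (ENNReal.div_lt_top (ENNReal.mul_ne_top (hstop x) (hatop x)) hb0).ne
    have hreq : hr x = (s x * a x / b x).toReal := by
      rw [hhr_def]
      show (s x).toReal * (a x).toReal / (b x).toReal = _
      rw [ENNReal.toReal_div, ENNReal.toReal_mul]
    rw [hreq, ENNReal.ofReal_toReal hgne]
  have hid5 : ∀ᵐ x ∂ν, Km x ≤ T x := by
    filter_upwards [hbpos, hspos] with x hb0 hs0
    have hbr : 0 < (b x).toReal := ENNReal.toReal_pos hb0 (hbtop x)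
    have harle : (b x).toReal ≤ (a x).toReal := ENNReal.toReal_mono (hatop x) (hb_le_a x)
    have hsr : 0 < (s x).toReal := ENNReal.toReal_pos hs0 (hstop x)
    have hsr_le : (s x).toReal ≤ hr x := by
      rw [hhr_def]
      show (s x).toReal ≤ (s x).toReal * (a x).toReal / (b x).toReal
      rw [mul_div_assoc]
      exact le_mul_of_one_le_right hsr.le ((one_le_div hbr).mpr harle)
    exact ENNReal.ofReal_le_ofReal (neg_le_neg (Real.log_le_log hsr hsr_le))
  -- integral assembly
  have hIKm_le : ∫⁻ x, Km x ∂ν ≤ condEntropyPart ν P cβ := by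
    rw [← hTint]; exact lintegral_mono_ae hid5
  have hIKm_ne : ∫⁻ x, Km x ∂ν ≠ ⊤ :=
    (lt_of_le_of_lt hIKm_le (lt_top_iff_ne_top.mpr hβfin)).ne
  have hIKp_le : ∫⁻ x, Kp x ∂ν ≤ ∫⁻ x, Km x ∂ν := by
    have h1 : ∫⁻ x, Kp x ∂ν + 1 ≤ ∫⁻ x, Km x ∂ν + 1 := by
      calc ∫⁻ x, Kp x ∂ν + 1 = ∫⁻ x, (Kp x + 1) ∂ν := by
            rw [lintegral_add_left' hKpa]
            simp
        _ ≤ ∫⁻ x, (Km x + ENNReal.ofReal (hr x)) ∂ν := lintegral_mono_ae hid3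
        _ = ∫⁻ x, Km x ∂ν + ∫⁻ x, ENNReal.ofReal (hr x) ∂ν := lintegral_add_left' hKma _
        _ = ∫⁻ x, Km x ∂ν + ∫⁻ x, s x * a x / b x ∂ν := by
            rw [lintegral_congr_ae hid4]
        _ ≤ ∫⁻ x, Km x ∂ν + 1 := add_le_add_right hKEY _
    exact (ENNReal.add_le_add_iff_right ENNReal.one_ne_top).mp h1
  have hIU_le : ∫⁻ x, U x ∂ν ≤ condEntropyPart ν P cβ := by
    have h1 : ∫⁻ x, U x ∂ν + ∫⁻ x, Km x ∂ν = ∫⁻ x, T x ∂ν + ∫⁻ x, Kp x ∂ν := by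
      rw [← lintegral_add_left' hUa, ← lintegral_add_left' hTa]
      exact lintegral_congr_ae hid2
    have h2 : ∫⁻ x, U x ∂ν + ∫⁻ x, Km x ∂ν ≤ ∫⁻ x, T x ∂ν + ∫⁻ x, Km x ∂ν := by
      rw [h1]; exact add_le_add_right hIKp_le _
    have h3 := (ENNReal.add_le_add_iff_right hIKm_ne).mp h2
    calc ∫⁻ x, U x ∂ν ≤ ∫⁻ x, T x ∂ν := h3
      _ = condEntropyPart ν P cβ := hTint
  rw [hEi1, hEi]
  calc ∫⁻ x, ENNReal.ofReal (-Real.log (b x).toReal) ∂ν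
      = ∫⁻ x, (ENNReal.ofReal (-Real.log (a x).toReal) + U x) ∂ν :=
        lintegral_congr_ae hmain
    _ = ∫⁻ x, ENNReal.ofReal (-Real.log (a x).toReal) ∂ν + ∫⁻ x, U x ∂ν :=
        lintegral_add_left' (houter.comp_aemeasurable haa) _
    _ ≤ ∫⁻ x, ENNReal.ofReal (-Real.log (a x).toReal) ∂ν + condEntropyPart ν P cβ :=
        add_le_add_right hIU_le _

lemma join_one (ν : Measure X) (f : X → X) (P : Finset (Set X)) (c : X → Measure X) :
    condEntropyJoin ν f P c 1 = condEntropyPart ν P c := by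
  refine lintegral_congr fun x => ?_
  have : (⋂ j < 1, f^[j] ⁻¹' pElem P (f^[j] x)) = pElem P x := by
    ext y
    simp [Nat.lt_one_iff]
  rw [this]

end Step

end HHW

/-- Conditional entropy subadditivity for refinements (Hu–Hua–Wu Lemma 2.6(i)
specialization): if `ν` is an invariant probability measure for an invertible `f`, `P` a
finite measurable partition, `γ`, `β` measurable partitions with conditional systems
`cγ`, `cβ`, with `H_ν(P|γ) < ∞`, and for each `1 ≤ i ≤ n-1` the partition
`f^i(P_0^{i-1} ∨ γ)` refines `β`, then
`H_ν(P_0^{n-1} | γ) ≤ H_ν(P|γ) + (n-1) H_ν(P|β)`. -/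
theorem condEntropy_join_le {X : Type*} [MeasurableSpace X]
    (ν : Measure X) [IsProbabilityMeasure ν]
    (f : X → X) (hf : Measurable f) (hbij : Function.Bijective f)
    (hinv : MeasurePreserving f ν ν)
    (P : Finset (Set X)) (hPmeas : ∀ A ∈ P, MeasurableSet A)
    (hPcover : ⋃₀ (↑P : Set (Set X)) = Set.univ)
    (hPdisj : (↑P : Set (Set X)).Pairwise Disjoint)
    (G B : X → Set X) (cγ cβ : X → Measure X)
    (hγ : IsCondSystem ν G cγ) (hβ : IsCondSystem ν B cβ)
    (hγmem : ∀ x, x ∈ G x) (hβmem : ∀ x, x ∈ B x)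
    (n : ℕ) (hn : 1 ≤ n)
    (hfin : condEntropyPart ν P cγ ≠ ⊤)
    (hrefine : ∀ i : ℕ, 1 ≤ i → i ≤ n - 1 → ∀ x : X,
      f^[i] '' ((⋂ j < i, f^[j] ⁻¹' pElem P (f^[j] x)) ∩ G x) ⊆ B (f^[i] x)) :
    condEntropyJoin ν f P cγ n ≤
      condEntropyPart ν P cγ + ((n - 1 : ℕ) : ℝ≥0∞) * condEntropyPart ν P cβ := by
  by_cases hβtop : condEntropyPart ν P cβ = ⊤
  · rcases eq_or_lt_of_le hn with h1 | h2
    · rw [← h1]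
      simp [HHW.join_one ν f P cγ]
    · have hne : ((n-1:ℕ):ℝ≥0∞) ≠ 0 := Nat.cast_ne_zero.mpr (Nat.sub_ne_zero_of_lt h2)
      rw [hβtop, ENNReal.mul_top hne]
      simp
  · have key : ∀ m, 1 ≤ m → m ≤ n → condEntropyJoin ν f P cγ m ≤
        condEntropyPart ν P cγ + ((m-1:ℕ):ℝ≥0∞) * condEntropyPart ν P cβ := by
      intro m
      induction m with
      | zero => intro h; exact absurd h (by norm_num)
      | succ k ih =>
        intro _ hkn
        rcases Nat.eq_zero_or_pos k with hk0 | hkpos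
        · subst hk0
          simp [HHW.join_one ν f P cγ]
        · have hkltn : k < n := lt_of_lt_of_le (Nat.lt_succ_self k) hkn
          have hrefK : ∀ x, f^[k] '' ((⋂ j < k, f^[j] ⁻¹' pElem P (f^[j] x)) ∩ G x)
              ⊆ B (f^[k] x) := hrefine k hkpos (Nat.le_sub_one_of_lt hkltn)
          calc condEntropyJoin ν f P cγ (k+1)
              ≤ condEntropyJoin ν f P cγ k + condEntropyPart ν P cβ :=
                HHW.entropy_step hPcover hPdisj hf hinv hPmeas hγ hβ k hrefK hβtop
            _ ≤ (condEntropyPart ν P cγ + ((k-1:ℕ):ℝ≥0∞) * condEntropyPart ν P cβ)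
                  + condEntropyPart ν P cβ :=
                add_le_add_left (ih hkpos hkltn.le) _
            _ = condEntropyPart ν P cγ + ((k+1-1:ℕ):ℝ≥0∞) * condEntropyPart ν P cβ := by
                rw [add_assoc]
                congr 1
                rw [Nat.add_sub_cancel]
                have hk : (k:ℝ≥0∞) = ((k-1:ℕ):ℝ≥0∞) + 1 := by
                  exact_mod_cast (congrArg (Nat.cast : ℕ → ℝ≥0∞)
                    (Nat.sub_add_cancel hkpos)).symm
                rw [hk, add_mul, one_mul]
    exact key n hn le_rfl
end
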